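/- arXiv:1507.08779 — 3 statements merged into one kernel-verified Lean document; each statement's English description precedes it below -/
import Mathlib

section
/- (Key lemma for filtration switching.) Let τ : Ω → (0,∞] be a random time on a probability space (Ω, 𝒢, Q), let F_t ⊆ 𝒢 be a sub-σ-algebra, and define G_t := F_t ∨ σ({τ ≤ s} : s ∈ [0,t]). Assume Q(τ > t | F_t) > 0 almost surely. Then for every integrable random variable X, almost surely E[1_{τ>t}·X | G_t] = 1_{τ>t} · E[1_{τ>t}·X | F_t] / E[1_{τ>t} | F_t]. In particular, for every G_t-measurable integrable X_t there exists an F_t-measurable X̃_t with 1_{τ>t}·X_t = 1_{τ>t}·X̃_t almost surely. -/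
open MeasureTheory
open scoped ENNReal

/-! The generators `{τ ≤ s}`, `s ≤ t`, of the extra information in `G_t` are disjoint from
`{τ > t}`, so on `{τ > t}` every `G_t`-event coincides with an `F_t`-event. Testing the candidate
against `G_t`-events therefore reduces to testing against `F_t`-events, and on `F_t` the measure
`Q` restricted to `{τ > t}` has density `Q(τ > t | F_t)` with respect to `Q`; multiplying by
this density cancels the denominator, which gives both the defining identity of the conditional
expectation and the integrability of the candidate. -/

namespace MeasurableSpace

theorem exists_measurableSet_inter_eq_of_sup_generateFrom {Ω : Type*} {m : MeasurableSpace Ω}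
    {S : Set (Set Ω)} {A : Set Ω} (hS : ∀ s ∈ S, Disjoint s A) {B : Set Ω}
    (hB : MeasurableSet[m ⊔ generateFrom S] B) :
    ∃ C, MeasurableSet[m] C ∧ B ∩ A = C ∩ A := by
  rw [← @generateFrom_measurableSet Ω m, generateFrom_sup_generateFrom] at hB
  induction B, hB using generateFrom_induction with
  | hC B hB _ =>
    rcases hB with hB | hB
    · exact ⟨B, hB, rfl⟩
    · exact ⟨∅, .empty, by rw [(hS B hB).inter_eq, Set.empty_inter]⟩
  | empty => exact ⟨∅, .empty, rfl⟩
  | compl B _ ih =>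
    obtain ⟨C, hC, hBC⟩ := ih
    refine ⟨Cᶜ, hC.compl, ?_⟩
    rw [← Set.sdiff_eq_compl_inter, ← Set.sdiff_eq_compl_inter, ← Set.sdiff_inter_self_eq_sdiff,
      hBC, Set.sdiff_inter_self_eq_sdiff]
  | iUnion B _ ih =>
    choose C hC hBC using ih
    exact ⟨⋃ n, C n, .iUnion hC, by simp only [Set.iUnion_inter, hBC]⟩

end MeasurableSpace

namespace MeasureTheory

variable {Ω : Type*} {m m0 : MeasurableSpace Ω} {Q : Measure Ω} {A : Set Ω}

theorem condExp_indicator_one_nonneg :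
    0 ≤ᵐ[Q] Q[A.indicator (fun _ => (1 : ℝ)) | m] :=
  condExp_nonneg (.of_forall (Set.indicator_nonneg fun _ _ => zero_le_one))

variable [IsFiniteMeasure Q]

theorem trim_restrict_eq_trim_withDensity_condExp_indicator (hm : m ≤ m0)
    (hA : MeasurableSet A) :
    (Q.restrict A).trim hm =
      (Q.withDensity fun ω => ENNReal.ofReal (Q[A.indicator (fun _ => (1 : ℝ)) | m] ω)).trim hm := by
  refine @Measure.ext _ m _ _ fun C hC => ?_
  have hint : Integrable (A.indicator fun _ => (1 : ℝ)) Q := (integrable_const 1).indicator hA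
  rw [trim_measurableSet_eq hm hC, trim_measurableSet_eq hm hC, Measure.restrict_apply (hm C hC),
    withDensity_apply _ (hm C hC),
    ← ofReal_integral_eq_lintegral_ofReal integrable_condExp.integrableOn
      (ae_restrict_of_ae condExp_indicator_one_nonneg),
    setIntegral_condExp hm hint hC, integral_indicator hA,
    setIntegral_const, smul_eq_mul, mul_one, ofReal_measureReal, Measure.restrict_apply hA,
    Set.inter_comm]

theorem setLIntegral_eq_lintegral_condExp_indicator_mul (hm : m ≤ m0) (hA : MeasurableSet A)
    {f : Ω → ℝ≥0∞} (hf : Measurable[m] f) :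
    ∫⁻ ω in A, f ω ∂Q =
      ∫⁻ ω, ENNReal.ofReal (Q[A.indicator (fun _ => (1 : ℝ)) | m] ω) * f ω ∂Q := by
  rw [← lintegral_trim hm hf, trim_restrict_eq_trim_withDensity_condExp_indicator hm hA,
    lintegral_trim hm hf, lintegral_withDensity_eq_lintegral_mul _ _ (hf.mono hm le_rfl)]
  · rfl
  · exact (stronglyMeasurable_condExp.measurable.mono hm le_rfl).ennreal_ofReal

theorem setIntegral_eq_integral_condExp_indicator_mul (hm : m ≤ m0) (hA : MeasurableSet A)
    {f : Ω → ℝ} (hf : StronglyMeasurable[m] f) :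
    ∫ ω in A, f ω ∂Q = ∫ ω, Q[A.indicator (fun _ => (1 : ℝ)) | m] ω * f ω ∂Q := by
  rw [integral_trim hm hf, trim_restrict_eq_trim_withDensity_condExp_indicator hm hA,
    ← integral_trim hm hf, integral_withDensity_eq_integral_toReal_smul
      (stronglyMeasurable_condExp.measurable.mono hm le_rfl).ennreal_ofReal
      (.of_forall fun _ => ENNReal.ofReal_lt_top)]
  refine integral_congr_ae ?_
  filter_upwards [condExp_indicator_one_nonneg (m := m) (Q := Q) (A := A)] with ω hω
  rw [ENNReal.toReal_ofReal hω, smul_eq_mul]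

theorem integrable_indicator_div_condExp_indicator (hm : m ≤ m0) (hA : MeasurableSet A)
    (hpos : ∀ᵐ ω ∂Q, 0 < Q[A.indicator (fun _ => (1 : ℝ)) | m] ω) {g : Ω → ℝ}
    (hg : StronglyMeasurable[m] g) (hgi : Integrable g Q) :
    Integrable (A.indicator fun ω => g ω / Q[A.indicator (fun _ => (1 : ℝ)) | m] ω) Q := by
  set h := Q[A.indicator (fun _ => (1 : ℝ)) | m]
  have hr : StronglyMeasurable[m] fun ω => g ω / h ω := hg.div stronglyMeasurable_condExp
  refine (integrable_indicator_iff hA).2 ⟨(hr.mono hm).aestronglyMeasurable, ?_⟩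
  have hr_enorm : Measurable[m] fun ω => ‖g ω / h ω‖ₑ := measurable_enorm.comp hr.measurable
  rw [HasFiniteIntegral, setLIntegral_eq_lintegral_condExp_indicator_mul hm hA hr_enorm]
  calc ∫⁻ ω, ENNReal.ofReal (h ω) * ‖g ω / h ω‖ₑ ∂Q = ∫⁻ ω, ‖g ω‖ₑ ∂Q := by
        refine lintegral_congr_ae ?_
        filter_upwards [hpos] with ω hω
        rw [← Real.enorm_eq_ofReal hω.le, ← enorm_mul, mul_div_cancel₀ _ hω.ne']
    _ < ∞ := hgi.2

theorem condExp_indicator_ae_eq_indicator_div {m' : MeasurableSpace Ω} (hm : m ≤ m')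
    (hm' : m' ≤ m0) (hA : MeasurableSet[m'] A)
    (htrace : ∀ B, MeasurableSet[m'] B → ∃ C, MeasurableSet[m] C ∧ B ∩ A = C ∩ A)
    (hpos : ∀ᵐ ω ∂Q, 0 < Q[A.indicator (fun _ => (1 : ℝ)) | m] ω) {X : Ω → ℝ}
    (hX : Integrable X Q) :
    Q[A.indicator X | m'] =ᵐ[Q]
      A.indicator fun ω => Q[A.indicator X | m] ω / Q[A.indicator (fun _ => (1 : ℝ)) | m] ω := by
  set h := Q[A.indicator (fun _ => (1 : ℝ)) | m]
  set g := Q[A.indicator X | m]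
  have hm0 : m ≤ m0 := hm.trans hm'
  have hA0 : MeasurableSet[m0] A := hm' A hA
  have hr : StronglyMeasurable[m] fun ω => g ω / h ω :=
    stronglyMeasurable_condExp.div stronglyMeasurable_condExp
  refine (ae_eq_condExp_of_forall_setIntegral_eq hm' (hX.indicator hA0)
    (fun _ _ _ => (integrable_indicator_div_condExp_indicator hm0 hA0 hpos
      stronglyMeasurable_condExp integrable_condExp).integrableOn)
    (fun B hB _ => ?_) ((hr.mono hm).indicator hA).aestronglyMeasurable).symm
  obtain ⟨C, hC, hBC⟩ := htrace B hB
  calc ∫ ω in B, A.indicator (fun ω => g ω / h ω) ω ∂Q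
      = ∫ ω in C ∩ A, g ω / h ω ∂Q := by rw [setIntegral_indicator hA0, hBC]
    _ = ∫ ω in A, C.indicator (fun ω => g ω / h ω) ω ∂Q := by
        rw [setIntegral_indicator (hm0 C hC), Set.inter_comm]
    _ = ∫ ω, h ω * C.indicator (fun ω => g ω / h ω) ω ∂Q :=
        setIntegral_eq_integral_condExp_indicator_mul hm0 hA0 (hr.indicator hC)
    _ = ∫ ω, C.indicator g ω ∂Q := by
        refine integral_congr_ae ?_
        filter_upwards [hpos] with ω hω
        by_cases hωC : ω ∈ C
        · simp only [Set.indicator_of_mem hωC, mul_div_cancel₀ _ hω.ne']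
        · simp only [Set.indicator_of_notMem hωC, mul_zero]
    _ = ∫ ω in C, g ω ∂Q := integral_indicator (hm0 C hC)
    _ = ∫ ω in C, A.indicator X ω ∂Q := setIntegral_condExp hm0 (hX.indicator hA0) hC
    _ = ∫ ω in B, A.indicator X ω ∂Q := by
        rw [setIntegral_indicator hA0, setIntegral_indicator hA0, hBC]

end MeasureTheory

theorem stmt_13_general
    {Ω : Type*} {m0 : MeasurableSpace Ω} {Q : Measure Ω} [IsProbabilityMeasure Q]
    (t : ℝ) (ht : 0 < t)
    (τ : Ω → ℝ≥0∞) (hτmeas : Measurable τ)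
    (Ft : MeasurableSpace Ω) (hFt : Ft ≤ m0)
    (Gt : MeasurableSpace Ω)
    (hGt : Gt = Ft ⊔ MeasurableSpace.generateFrom
      {A | ∃ s : ℝ, 0 ≤ s ∧ s ≤ t ∧ A = {ω | τ ω ≤ ENNReal.ofReal s}})
    (hpos : ∀ᵐ ω ∂Q, 0 <
      (Q[Set.indicator {ω' | ENNReal.ofReal t < τ ω'} (fun _ => (1 : ℝ)) | Ft]) ω) :
    (∀ X : Ω → ℝ, Integrable X Q →
      Q[Set.indicator {ω' | ENNReal.ofReal t < τ ω'} X | Gt]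
        =ᵐ[Q] Set.indicator {ω' | ENNReal.ofReal t < τ ω'}
          (fun ω => (Q[Set.indicator {ω' | ENNReal.ofReal t < τ ω'} X | Ft]) ω /
            (Q[Set.indicator {ω' | ENNReal.ofReal t < τ ω'} (fun _ => (1 : ℝ)) | Ft]) ω))
    ∧ (∀ X : Ω → ℝ, Integrable X Q → StronglyMeasurable[Gt] X →
        ∃ X' : Ω → ℝ, StronglyMeasurable[Ft] X' ∧
          Set.indicator {ω' | ENNReal.ofReal t < τ ω'} X
            =ᵐ[Q] Set.indicator {ω' | ENNReal.ofReal t < τ ω'} X') := by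
  set A : Set Ω := {ω' | ENNReal.ofReal t < τ ω'}
  have hgen_disjoint : ∀ B ∈ {B | ∃ s : ℝ, 0 ≤ s ∧ s ≤ t ∧ B = {ω | τ ω ≤ ENNReal.ofReal s}},
      Disjoint B A := by
    rintro _ ⟨s, -, hst, rfl⟩
    exact Set.disjoint_left.2 fun ω hle hlt =>
      (hle.trans (ENNReal.ofReal_le_ofReal hst)).not_gt hlt
  have hFG : Ft ≤ Gt := hGt ▸ le_sup_left
  have hGt_le : Gt ≤ m0 := hGt ▸ sup_le hFt (MeasurableSpace.generateFrom_le <| by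
    rintro _ ⟨s, -, -, rfl⟩
    exact hτmeas measurableSet_Iic)
  have hA : MeasurableSet[Gt] A := by
    have hle_t : MeasurableSet[Gt] {ω | τ ω ≤ ENNReal.ofReal t} :=
      hGt ▸ le_sup_right (a := Ft) _
        (MeasurableSpace.measurableSet_generateFrom ⟨t, ht.le, le_rfl, rfl⟩)
    simpa only [Set.compl_ofPred, not_le] using hle_t.compl
  have hcondExp := fun X (hX : Integrable X Q) =>
    condExp_indicator_ae_eq_indicator_div hFG hGt_le hA
      (fun B hB => MeasurableSpace.exists_measurableSet_inter_eq_of_sup_generateFrom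
        hgen_disjoint (hGt ▸ hB))
      hpos hX
  refine ⟨hcondExp, fun X hX hXm =>
    ⟨fun ω => Q[A.indicator X | Ft] ω / Q[A.indicator (fun _ => (1 : ℝ)) | Ft] ω,
      stronglyMeasurable_condExp.div stronglyMeasurable_condExp, ?_⟩⟩
  have hX_cond := hcondExp X hX
  rwa [condExp_of_stronglyMeasurable hGt_le (hXm.indicator hA) (hX.indicator (hGt_le A hA))]
    at hX_cond

/-- Key lemma for filtration switching: with
`G_t = F_t ∨ σ({τ ≤ s} : s ∈ [0,t])` and `Q(τ > t | F_t) > 0` a.s.,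
`E[1_{τ>t} X | G_t] = 1_{τ>t} E[1_{τ>t} X | F_t] / E[1_{τ>t} | F_t]` a.s.;
in particular every `G_t`-measurable integrable `X` agrees on `{τ > t}` with
some `F_t`-measurable `X̃`. -/
theorem stmt_13
    {Ω : Type*} {m0 : MeasurableSpace Ω} {Q : Measure Ω} [IsProbabilityMeasure Q]
    (t : ℝ) (ht : 0 < t)
    (τ : Ω → ℝ≥0∞) (hτmeas : Measurable τ) (hτpos : ∀ ω, 0 < τ ω)
    (Ft : MeasurableSpace Ω) (hFt : Ft ≤ m0)
    (Gt : MeasurableSpace Ω)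
    (hGt : Gt = Ft ⊔ MeasurableSpace.generateFrom
      {A | ∃ s : ℝ, 0 ≤ s ∧ s ≤ t ∧ A = {ω | τ ω ≤ ENNReal.ofReal s}})
    (hpos : ∀ᵐ ω ∂Q, 0 <
      (Q[Set.indicator {ω' | ENNReal.ofReal t < τ ω'} (fun _ => (1 : ℝ)) | Ft]) ω) :
    (∀ X : Ω → ℝ, Integrable X Q →
      Q[Set.indicator {ω' | ENNReal.ofReal t < τ ω'} X | Gt]
        =ᵐ[Q] Set.indicator {ω' | ENNReal.ofReal t < τ ω'}
          (fun ω => (Q[Set.indicator {ω' | ENNReal.ofReal t < τ ω'} X | Ft]) ω /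
            (Q[Set.indicator {ω' | ENNReal.ofReal t < τ ω'} (fun _ => (1 : ℝ)) | Ft]) ω))
    ∧ (∀ X : Ω → ℝ, Integrable X Q → StronglyMeasurable[Gt] X →
        ∃ X' : Ω → ℝ, StronglyMeasurable[Ft] X' ∧
          Set.indicator {ω' | ENNReal.ofReal t < τ ω'} X
            =ᵐ[Q] Set.indicator {ω' | ENNReal.ofReal t < τ ω'} X') :=
  stmt_13_general t ht τ hτmeas Ft hFt Gt hGt hpos
end

section
/- (Deterministic basis in models with q ≡ Id, e.g. Hull–White and Cheyette.) Fix N ≥ 1, a continuous function a : [0,∞) → ℝ^N, and set g_i(t,u) := exp(−∫_t^u a_i(v) dv) and G_0(t,T_0,T_1) := ∫_{T_0}^{T_1} g(t,s) ds ∈ ℝ^N (componentwise). Fix t ≥ 0, a tenor x > 0, T := t + x, initial values E_0, F_0 > −1/x, and for X ∈ ℝ^N and an N×N real matrix Y define E_t and F_t by the reconstruction formulas log((1/x + E_t)/(1/x + E_0)) = G_0(t,T−x,T)ᵀ(X + Y(G_0(t,t,T) − ½G_0(t,T−x,T))) and log((1/x + F_t)/(1/x + F_0)) = G_0(t,T−x,T)ᵀ(X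 + Y(G_0(t,t,T) − ½G_0(t,T−x,T))) (the same exponent, since the volatility deformation q is the identity and the shift is k(T,x) = 1/x). Then for all tenors 0 < x_1 < x_2 with T_i := t + x_i, the basis β_t(x_1,x_2) := (1/x_2)·log((1/x_2 + E_t(T_2,x_2))/(1/x_2 + F_t(T_2,x_2))) − (1/x_1)·log((1/x_1 + E_t(T_1,x_1))/(1/x_1 + F_t(T_1,x_1))) does not depend on (X,Y): it equals (1/x_2)·log((1/x_2 + E_0(T_2,x_2))/(1/x_2 + F_0(T_2,x_2))) − (1/x_1)·log((1/x_1 + E_0(T_1,x_1))/(1/x_1 + F_0(T_1,x_1))). Equivalently, the ratio (1 + x F_t)/(1 + x E_t) equals its initial value (1 + x F_0)/(1 + x E_0) for every (X,Y). -/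
open Matrix

/-!
Since `q ≡ Id` and `k(T,x) = 1/x`, the OIS and Libor reconstruction formulas have the same
right-hand side, so `(1/x + E_t)/(1/x + E_0) = (1/x + F_t)/(1/x + F_0)` by injectivity of `log`
on `(0, ∞)`. Cross-multiplying, `(1/x + E_t)/(1/x + F_t)` is frozen at its initial value, and
both the basis and `(1 + x F_t)/(1 + x E_t)` are functions of this ratio alone.
-/

lemma div_eq_div_of_log_div_eq_log_div {a b c d : ℝ} (ha : 0 < a) (hb : 0 < b) (hc : 0 < c)
    (hd : 0 < d) (h : Real.log (a / b) = Real.log (c / d)) : a / c = b / d := by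
  have hquot : a / b = c / d :=
    Real.log_injOn_pos (div_pos ha hb) (div_pos hc hd) h
  rw [div_eq_div_iff hb.ne' hd.ne'] at hquot
  rw [div_eq_div_iff hc.ne' hd.ne']
  linarith

lemma one_add_mul_div_one_add_mul {x : ℝ} (hx : x ≠ 0) (u v : ℝ) :
    (1 + x * u) / (1 + x * v) = (1 / x + u) / (1 / x + v) := by
  rw [← mul_div_mul_left (1 / x + u) _ hx, mul_add, mul_add, mul_one_div_cancel hx]

theorem stmt_14_general
    {N : ℕ}
    (G0 : ℝ → ℝ → ℝ → Fin N → ℝ)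
    (t : ℝ)
    (E0 F0 : ℝ → ℝ)
    (hE0 : ∀ x, 0 < x → -(1 / x) < E0 x) (hF0 : ∀ x, 0 < x → -(1 / x) < F0 x)
    (Et Ft : ℝ → (Fin N → ℝ) → Matrix (Fin N) (Fin N) ℝ → ℝ)
    (hEtpos : ∀ x X Y, 0 < x → -(1 / x) < Et x X Y)
    (hFtpos : ∀ x X Y, 0 < x → -(1 / x) < Ft x X Y)
    (hEt : ∀ x X Y, 0 < x →
      Real.log ((1 / x + Et x X Y) / (1 / x + E0 x)) =
        G0 t (t + x - x) (t + x) ⬝ᵥ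
          (X + Y.mulVec (G0 t t (t + x) - (1 / 2 : ℝ) • G0 t (t + x - x) (t + x))))
    (hFt : ∀ x X Y, 0 < x →
      Real.log ((1 / x + Ft x X Y) / (1 / x + F0 x)) =
        G0 t (t + x - x) (t + x) ⬝ᵥ
          (X + Y.mulVec (G0 t t (t + x) - (1 / 2 : ℝ) • G0 t (t + x - x) (t + x)))) :
    (∀ x1 x2 : ℝ, 0 < x1 → x1 < x2 →
      ∀ (X : Fin N → ℝ) (Y : Matrix (Fin N) (Fin N) ℝ),
        (1 / x2) * Real.log ((1 / x2 + Et x2 X Y) / (1 / x2 + Ft x2 X Y))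
          - (1 / x1) * Real.log ((1 / x1 + Et x1 X Y) / (1 / x1 + Ft x1 X Y))
        = (1 / x2) * Real.log ((1 / x2 + E0 x2) / (1 / x2 + F0 x2))
          - (1 / x1) * Real.log ((1 / x1 + E0 x1) / (1 / x1 + F0 x1)))
    ∧ (∀ x : ℝ, 0 < x →
      ∀ (X : Fin N → ℝ) (Y : Matrix (Fin N) (Fin N) ℝ),
        (1 + x * Ft x X Y) / (1 + x * Et x X Y)
          = (1 + x * F0 x) / (1 + x * E0 x)) := by
  have ratio : ∀ x X Y, 0 < x →
      (1 / x + Et x X Y) / (1 / x + Ft x X Y) = (1 / x + E0 x) / (1 / x + F0 x) :=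
    fun x X Y hx => div_eq_div_of_log_div_eq_log_div
      (neg_lt_iff_pos_add'.mp (hEtpos x X Y hx)) (neg_lt_iff_pos_add'.mp (hE0 x hx))
      (neg_lt_iff_pos_add'.mp (hFtpos x X Y hx)) (neg_lt_iff_pos_add'.mp (hF0 x hx))
      (by rw [hEt x X Y hx, hFt x X Y hx])
  refine ⟨fun x1 x2 hx1 hx12 X Y => ?_, fun x hx X Y => ?_⟩
  · rw [ratio x1 X Y hx1, ratio x2 X Y (hx1.trans hx12)]
  · rw [one_add_mul_div_one_add_mul hx.ne', one_add_mul_div_one_add_mul hx.ne', ← inv_div,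
      ratio x X Y hx, inv_div]

/-- Deterministic basis in multiple-curve HJM models with
`q ≡ Id` (Hull–White, Cheyette): since OIS and Libor forward rates share the
same reconstruction exponent, the basis `β_t(x₁,x₂)` does not depend on the
Markov state `(X,Y)` and equals its initial value; equivalently
`(1+xF_t)/(1+xE_t) = (1+xF₀)/(1+xE₀)`. -/
theorem stmt_14
    {N : ℕ} (hN : 1 ≤ N)
    (a : ℝ → Fin N → ℝ) (ha : ∀ i, ContinuousOn (fun v => a v i) (Set.Ici 0))
    (g : Fin N → ℝ → ℝ → ℝ)
    (hg : ∀ i t u, g i t u = Real.exp (-(∫ v in t..u, a v i)))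
    (G0 : ℝ → ℝ → ℝ → Fin N → ℝ)
    (hG0 : ∀ t T0 T1 i, G0 t T0 T1 i = ∫ s in T0..T1, g i t s)
    (t : ℝ) (ht : 0 ≤ t)
    (E0 F0 : ℝ → ℝ)
    (hE0 : ∀ x, 0 < x → -(1 / x) < E0 x) (hF0 : ∀ x, 0 < x → -(1 / x) < F0 x)
    (Et Ft : ℝ → (Fin N → ℝ) → Matrix (Fin N) (Fin N) ℝ → ℝ)
    (hEtpos : ∀ x X Y, 0 < x → -(1 / x) < Et x X Y)
    (hFtpos : ∀ x X Y, 0 < x → -(1 / x) < Ft x X Y)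
    (hEt : ∀ x X Y, 0 < x →
      Real.log ((1 / x + Et x X Y) / (1 / x + E0 x)) =
        G0 t (t + x - x) (t + x) ⬝ᵥ
          (X + Y.mulVec (G0 t t (t + x) - (1 / 2 : ℝ) • G0 t (t + x - x) (t + x))))
    (hFt : ∀ x X Y, 0 < x →
      Real.log ((1 / x + Ft x X Y) / (1 / x + F0 x)) =
        G0 t (t + x - x) (t + x) ⬝ᵥ
          (X + Y.mulVec (G0 t t (t + x) - (1 / 2 : ℝ) • G0 t (t + x - x) (t + x)))) :
    (∀ x1 x2 : ℝ, 0 < x1 → x1 < x2 →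
      ∀ (X : Fin N → ℝ) (Y : Matrix (Fin N) (Fin N) ℝ),
        (1 / x2) * Real.log ((1 / x2 + Et x2 X Y) / (1 / x2 + Ft x2 X Y))
          - (1 / x1) * Real.log ((1 / x1 + Et x1 X Y) / (1 / x1 + Ft x1 X Y))
        = (1 / x2) * Real.log ((1 / x2 + E0 x2) / (1 / x2 + F0 x2))
          - (1 / x1) * Real.log ((1 / x1 + E0 x1) / (1 / x1 + F0 x1)))
    ∧ (∀ x : ℝ, 0 < x →
      ∀ (X : Fin N → ℝ) (Y : Matrix (Fin N) (Fin N) ℝ),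
        (1 + x * Ft x X Y) / (1 + x * Et x X Y)
          = (1 + x * F0 x) / (1 + x * E0 x)) :=
  stmt_14_general G0 t E0 F0 hE0 hF0 Et Ft hEtpos hFtpos hEt hFt
end

section
/- (Stochastic basis in the Moreni–Pallavicini model.) Fix N ≥ 1, a continuous function a : [0,∞) → ℝ^N, g_i(t,u) := exp(−∫_t^u a_i(v) dv), G_0(t,T_0,T_1) := ∫_{T_0}^{T_1} g(t,s) ds, and G(t,T_0,T_1;T,x) := ∫_{T_0}^{T_1} q(s,T,x) g(t,s) ds with q(u,T,x) := diag(e^{xη_1}, …, e^{xη_N}) for a fixed vector η ∈ ℝ^N. Fix t ≥ 0, x > 0, T := t + x, a matrix Y, and initial values E_0 > −1/x, F_0 > −k with shift k = k(T,x) > 0; define E_t(X) and F_t(X) for X ∈ ℝ^N by the reconstruction formulas log((1/x+E_t)/(1/x+E_0)) = G_0(t,T−x,T)ᵀ(X + Y(G_0(t,t,T) − ½G_0(t,T−x,T))) and log((k+F_t)/(k+F_0)) = G(t,T−x,T;T,x)ᵀ(X + Y(G_0(t,t,T) − ½G(t,T−x,T;T,x))). If η_i ≠ 0 for some i, then G(t,T−x,T;T,x)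 ≠ G_0(t,T−x,T) (the i-th component differs by the nonzero quantity (e^{xη_i}−1)∫_{T−x}^T g_i(t,s) ds), and consequently the ratio X ↦ P_t(T;e)/P_t(T;x) := (1 + x F_t(X))/(1 + x E_t(X)) · (a fixed positive constant) is a non-constant function of X ∈ ℝ^N. -/
/-!
The `i`-th components of `G` and `G₀` differ by `(e^{xη_i} - 1) ∫ g_i`, and the integral of the
positive function `g_i` over `[t, t + x]` is positive, so the difference is nonzero.

Inverting the logarithms, `1 + x E_t(X)` is a positive multiple of `exp (G₀ ⬝ᵥ X)` and `1 + x F_t(X)`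
is a constant plus a positive multiple of `exp (G ⬝ᵥ X)`. Along the line `X = s eᵢ` a constant
ratio would give `D + p e^{us} = q e^{zs}` for all `s` with `u = Gᵢ > 0` and `u ≠ z = G₀ᵢ`, which
the values at `s = 0, 1, 2` rule out unless `p = 0`.
-/

open Matrix Real

lemma integral_exp_neg_integral_pos {f : ℝ → ℝ} {t T : ℝ} (htT : t < T)
    (hf : ContinuousOn f (Set.Icc t T)) :
    0 < ∫ s in t..T, exp (-∫ v in t..s, f v) := by
  have hprimitive : ContinuousOn (fun s => ∫ v in t..s, f v) (Set.Icc t T) := by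
    rw [← Set.uIcc_of_le htT.le] at hf ⊢
    exact intervalIntegral.continuousOn_primitive_interval
      (hf.integrableOn_compact isCompact_uIcc)
  exact intervalIntegral.intervalIntegral_pos_of_pos_on
    ((continuous_exp.comp_continuousOn hprimitive.neg).intervalIntegrable_of_Icc htT.le)
    (fun _ _ => exp_pos _) htT

lemma eq_mul_exp_of_log_div_eq {a b r : ℝ} (ha : 0 < a) (hb : 0 < b) (h : log (a / b) = r) :
    a = b * exp r := by
  rw [← h, exp_log (div_pos ha hb), mul_div_cancel₀ _ hb.ne']

lemma eq_zero_of_forall_add_mul_exp_eq {D p q u z : ℝ} (hu : u ≠ 0) (huz : u ≠ z)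
    (h : ∀ s, D + p * exp (u * s) = q * exp (z * s)) : p = 0 := by
  have h₀ := h 0
  have h₁ := h 1
  have h₂ := h 2
  simp only [mul_zero, mul_one, exp_zero] at h₀ h₁ h₂
  have hsq : ∀ w : ℝ, exp (w * 2) = exp w * exp w := fun w => by rw [← exp_add, mul_two]
  rw [hsq, hsq] at h₂
  -- with `a = e^u`, `b = e^z`: `p (a - 1) = q (b - 1)` and `p a (a - 1) = q b (b - 1)`
  have hkey : p * (exp u - 1) * (exp z - exp u) = 0 := by
    linear_combination exp z * (h₁ - h₀) - h₂ + h₁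
  have hu1 : exp u - 1 ≠ 0 := sub_ne_zero.2 ((exp_eq_one_iff u).not.2 hu)
  have hzu : exp z - exp u ≠ 0 := sub_ne_zero.2 (exp_injective.ne huz.symm)
  simpa [hu1, hzu] using hkey

lemma not_forall_mul_div_exp_eq {ι : Type*} [Fintype ι] [DecidableEq ι]
    {v₀ v₁ w₀ w₁ : ι → ℝ} {A B D c : ℝ} (hA : A ≠ 0) (hB : B ≠ 0) (hc : c ≠ 0) {i : ι}
    (hu : v₁ i ≠ 0) (huz : v₁ i ≠ v₀ i) (ρ : ℝ) :
    ¬ ∀ X, c * ((D + B * exp (v₁ ⬝ᵥ (X + w₁))) / (A * exp (v₀ ⬝ᵥ (X + w₀)))) = ρ := by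
  intro h
  have hline : ∀ s, D + B * exp (v₁ ⬝ᵥ w₁) * exp (v₁ i * s)
      = ρ / c * A * exp (v₀ ⬝ᵥ w₀) * exp (v₀ i * s) := by
    intro s
    have hs := h (Pi.single i s)
    simp only [dotProduct_add, dotProduct_single, exp_add] at hs
    field_simp at hs ⊢
    linear_combination hs
  exact mul_ne_zero hB (exp_pos _).ne' (eq_zero_of_forall_add_mul_exp_eq hu huz hline)

theorem stmt_15_general
    {N : ℕ}
    (a : ℝ → Fin N → ℝ) (ha : ∀ i, ContinuousOn (fun v => a v i) (Set.Ici 0))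
    (η : Fin N → ℝ)
    (g : Fin N → ℝ → ℝ → ℝ)
    (hg : ∀ i t u, g i t u = Real.exp (-(∫ v in t..u, a v i)))
    (G0 : ℝ → ℝ → ℝ → Fin N → ℝ)
    (hG0 : ∀ t T0 T1 i, G0 t T0 T1 i = ∫ s in T0..T1, g i t s)
    (G : ℝ → ℝ → ℝ → ℝ → ℝ → Fin N → ℝ)
    (hG : ∀ t T0 T1 T x i, G t T0 T1 T x i = ∫ s in T0..T1, Real.exp (x * η i) * g i t s)
    (t x : ℝ) (ht : 0 ≤ t) (hx : 0 < x)
    (Y : Matrix (Fin N) (Fin N) ℝ)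
    (E0 F0 k : ℝ) (hE0 : -(1 / x) < E0) (hF0 : -k < F0)
    (Et Ft : (Fin N → ℝ) → ℝ)
    (hEtpos : ∀ X, -(1 / x) < Et X)
    (hFtpos : ∀ X, -k < Ft X)
    (hEt : ∀ X,
      Real.log ((1 / x + Et X) / (1 / x + E0)) =
        G0 t (t + x - x) (t + x) ⬝ᵥ
          (X + Y.mulVec (G0 t t (t + x) - (1 / 2 : ℝ) • G0 t (t + x - x) (t + x))))
    (hFt : ∀ X,
      Real.log ((k + Ft X) / (k + F0)) =
        G t (t + x - x) (t + x) (t + x) x ⬝ᵥ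
          (X + Y.mulVec (G0 t t (t + x) -
            (1 / 2 : ℝ) • G t (t + x - x) (t + x) (t + x) x)))
    (i : Fin N) (hηi : η i ≠ 0) :
    (G t (t + x - x) (t + x) (t + x) x ≠ G0 t (t + x - x) (t + x)
      ∧ G t (t + x - x) (t + x) (t + x) x i - G0 t (t + x - x) (t + x) i
          = (Real.exp (x * η i) - 1) * ∫ s in (t + x - x)..(t + x), g i t s
      ∧ (Real.exp (x * η i) - 1) * (∫ s in (t + x - x)..(t + x), g i t s) ≠ 0)
    ∧ (∀ c : ℝ, 0 < c →
        ¬ ∃ ρ : ℝ, ∀ X : Fin N → ℝ,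
          c * ((1 + x * Ft X) / (1 + x * Et X)) = ρ) := by
  simp only [add_sub_cancel_right] at hEt hFt ⊢
  have hI : 0 < ∫ s in t..t + x, g i t s := by
    simp only [hg]
    exact integral_exp_neg_integral_pos (by linarith)
      ((ha i).mono fun s hs => ht.trans hs.1)
  have hGi : G t t (t + x) (t + x) x i = exp (x * η i) * ∫ s in t..t + x, g i t s := by
    rw [hG, intervalIntegral.integral_const_mul]
  have hdiff : G t t (t + x) (t + x) x i - G0 t t (t + x) i
      = (exp (x * η i) - 1) * ∫ s in t..t + x, g i t s := by
    rw [hGi, hG0]; ring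
  have hne : (exp (x * η i) - 1) * ∫ s in t..t + x, g i t s ≠ 0 :=
    mul_ne_zero (sub_ne_zero.2 ((exp_eq_one_iff _).not.2 (mul_ne_zero hx.ne' hηi))) hI.ne'
  have hGi_ne : G t t (t + x) (t + x) x i ≠ G0 t t (t + x) i :=
    fun h => hne (by rw [← hdiff, h, sub_self])
  refine ⟨⟨fun h => hGi_ne (congrFun h i), hdiff, hne⟩, ?_⟩
  rintro c hc ⟨ρ, hρ⟩
  have hE0' : 0 < 1 / x + E0 := by linarith
  have hF0' : 0 < k + F0 := by linarith
  have hE : ∀ X, 1 + x * Et X = x * (1 / x + E0) * exp (G0 t t (t + x) ⬝ᵥ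
      (X + Y.mulVec (G0 t t (t + x) - (1 / 2 : ℝ) • G0 t t (t + x)))) := fun X => by
    rw [mul_assoc, ← eq_mul_exp_of_log_div_eq (by linarith [hEtpos X]) hE0' (hEt X)]
    field_simp
  have hF : ∀ X, 1 + x * Ft X = (1 - x * k) + x * (k + F0) * exp (G t t (t + x) (t + x) x ⬝ᵥ
      (X + Y.mulVec (G0 t t (t + x) - (1 / 2 : ℝ) • G t t (t + x) (t + x) x))) := fun X => by
    rw [mul_assoc, ← eq_mul_exp_of_log_div_eq (by linarith [hFtpos X]) hF0' (hFt X)]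
    ring
  simp only [hE, hF] at hρ
  exact not_forall_mul_div_exp_eq (by positivity) (by positivity) hc.ne'
    (by rw [hGi]; positivity) hGi_ne ρ hρ

/-- Stochastic basis in the Moreni–Pallavicini model: with
the tenor-dependent volatility deformation `q(u,T,x) = diag(e^{xη_i})`, if some
`η_i ≠ 0` then `G(t,T−x,T;T,x) ≠ G₀(t,T−x,T)` (the `i`-th components differ by
`(e^{xη_i}−1)∫_{T−x}^T g_i(t,s) ds ≠ 0`), and consequently the ratio
`X ↦ P_t(T;e)/P_t(T;x) = (1+xF_t(X))/(1+xE_t(X)) · const` is a non-constant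
function of the Markov state `X`. -/
theorem stmt_15
    {N : ℕ} (hN : 1 ≤ N)
    (a : ℝ → Fin N → ℝ) (ha : ∀ i, ContinuousOn (fun v => a v i) (Set.Ici 0))
    (η : Fin N → ℝ)
    (g : Fin N → ℝ → ℝ → ℝ)
    (hg : ∀ i t u, g i t u = Real.exp (-(∫ v in t..u, a v i)))
    (G0 : ℝ → ℝ → ℝ → Fin N → ℝ)
    (hG0 : ∀ t T0 T1 i, G0 t T0 T1 i = ∫ s in T0..T1, g i t s)
    (G : ℝ → ℝ → ℝ → ℝ → ℝ → Fin N → ℝ)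
    (hG : ∀ t T0 T1 T x i, G t T0 T1 T x i = ∫ s in T0..T1, Real.exp (x * η i) * g i t s)
    (t x : ℝ) (ht : 0 ≤ t) (hx : 0 < x)
    (Y : Matrix (Fin N) (Fin N) ℝ)
    (E0 F0 k : ℝ) (hk : 0 < k) (hE0 : -(1 / x) < E0) (hF0 : -k < F0)
    (Et Ft : (Fin N → ℝ) → ℝ)
    (hEtpos : ∀ X, -(1 / x) < Et X)
    (hFtpos : ∀ X, -k < Ft X)
    (hEt : ∀ X,
      Real.log ((1 / x + Et X) / (1 / x + E0)) =
        G0 t (t + x - x) (t + x) ⬝ᵥ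
          (X + Y.mulVec (G0 t t (t + x) - (1 / 2 : ℝ) • G0 t (t + x - x) (t + x))))
    (hFt : ∀ X,
      Real.log ((k + Ft X) / (k + F0)) =
        G t (t + x - x) (t + x) (t + x) x ⬝ᵥ
          (X + Y.mulVec (G0 t t (t + x) -
            (1 / 2 : ℝ) • G t (t + x - x) (t + x) (t + x) x)))
    (i : Fin N) (hηi : η i ≠ 0) :
    (G t (t + x - x) (t + x) (t + x) x ≠ G0 t (t + x - x) (t + x)
      ∧ G t (t + x - x) (t + x) (t + x) x i - G0 t (t + x - x) (t + x) i
          = (Real.exp (x * η i) - 1) * ∫ s in (t + x - x)..(t + x), g i t s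
      ∧ (Real.exp (x * η i) - 1) * (∫ s in (t + x - x)..(t + x), g i t s) ≠ 0)
    ∧ (∀ c : ℝ, 0 < c →
        ¬ ∃ ρ : ℝ, ∀ X : Fin N → ℝ,
          c * ((1 + x * Ft X) / (1 + x * Et X)) = ρ) :=
  stmt_15_general a ha η g hg G0 hG0 G hG t x ht hx Y E0 F0 k hE0 hF0 Et Ft hEtpos hFtpos hEt hFt i
    hηi
end
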